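/- If the function class {Φ} is a universal approximator of continuous functions on a compact domain K ⊂ V and the frame F is bounded on K (∃ c > 0 with ‖ρ₂(g)‖_op ≤ c for all g ∈ F(X), X ∈ K) and G-equivariant with |F(X)| = m constant, then for any continuous G-equivariant target f and ε > 0, choosing Φ with sup_{X ∈ K'} ‖Φ(X) − f(X)‖ ≤ ε/c on the saturated domain K' = ∪_{X∈K} {ρ₁(g)⁻¹X : g ∈ F(X)} gives sup_{X ∈ K} ‖⟨Φ⟩_F(X) − f(X)‖ ≤ ε. -/

import Mathlib

/-!
An equivariant `f` is its own frame average, so `⟨Φ⟩_F X - f X = ⟨Φ - f⟩_F X` is an average of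
the vectors `ρ₂ g ((Φ - f) ((ρ₁ g)⁻¹ X))`, `g ∈ F X`. Each of them has norm at most `c · ε / c = ε`,
because `(ρ₁ g)⁻¹ X` lies in the saturated domain where `Φ` is `ε / c`-close to `f`.
-/

open scoped BigOperators

noncomputable def frameAvg {G V W : Type*} [Group G]
    [NormedAddCommGroup V] [NormedSpace ℝ V]
    [NormedAddCommGroup W] [NormedSpace ℝ W]
    (ρ₁ : G →* (V ≃ₗ[ℝ] V)) (ρ₂ : G →* (W ≃L[ℝ] W))
    (F : V → Finset G) (Φ : V → W) (X : V) : W :=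
  ((F X).card : ℝ)⁻¹ • ∑ g ∈ F X, ρ₂ g (Φ ((ρ₁ g)⁻¹ X))

theorem Finset.norm_inv_card_smul_sum_le {ι E : Type*} [SeminormedAddCommGroup E]
    [NormedSpace ℝ E] {s : Finset ι} (hs : s.Nonempty) {v : ι → E} {ε : ℝ}
    (h : ∀ i ∈ s, ‖v i‖ ≤ ε) : ‖(s.card : ℝ)⁻¹ • ∑ i ∈ s, v i‖ ≤ ε := by
  have hcard : (0 : ℝ) < s.card := by exact_mod_cast hs.card_pos
  rw [norm_smul, norm_inv, Real.norm_natCast, inv_mul_le_iff₀ hcard]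
  simpa [Finset.sum_const, nsmul_eq_mul] using norm_sum_le_of_le s h

section FrameAveraging

variable {G V W : Type*} [Group G]
    [NormedAddCommGroup V] [NormedSpace ℝ V]
    [NormedAddCommGroup W] [NormedSpace ℝ W]
    (ρ₁ : G →* (V ≃ₗ[ℝ] V)) (ρ₂ : G →* (W ≃L[ℝ] W)) (F : V → Finset G)

theorem frameAvg_sub (Φ Ψ : V → W) (X : V) :
    frameAvg ρ₁ ρ₂ F Φ X - frameAvg ρ₁ ρ₂ F Ψ X = frameAvg ρ₁ ρ₂ F (Φ - Ψ) X := by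
  simp only [frameAvg, ← smul_sub, ← Finset.sum_sub_distrib, Pi.sub_apply, map_sub]

theorem frameAvg_eq_self_of_equivariant {f : V → W}
    (hf : ∀ (g : G) (X : V), f (ρ₁ g X) = ρ₂ g (f X)) {X : V} (hX : (F X).Nonempty) :
    frameAvg ρ₁ ρ₂ F f X = f X := by
  have hterm : ∀ g ∈ F X, ρ₂ g (f ((ρ₁ g)⁻¹ X)) = f X := fun g _ => by
    rw [← hf, ← LinearEquiv.mul_apply, mul_inv_cancel, LinearEquiv.coe_one, id]
  have hcard : ((F X).card : ℝ) ≠ 0 := by exact_mod_cast hX.card_pos.ne'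
  rw [frameAvg, Finset.sum_congr rfl hterm, Finset.sum_const, ← Nat.cast_smul_eq_nsmul ℝ,
    smul_smul, inv_mul_cancel₀ hcard, one_smul]

end FrameAveraging

theorem frameAvg_universal_approx_general {G V W : Type*} [Group G]
    [NormedAddCommGroup V] [NormedSpace ℝ V]
    [NormedAddCommGroup W] [NormedSpace ℝ W]
    (ρ₁ : G →* (V ≃ₗ[ℝ] V)) (ρ₂ : G →* (W ≃L[ℝ] W))
    (F : V → Finset G) (K : Set V)
    (m : ℕ) (hm : 0 < m) (hcard : ∀ X : V, (F X).card = m)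
    (c : ℝ) (hc : 0 < c)
    (hbound : ∀ X ∈ K, ∀ g ∈ F X, ‖((ρ₂ g : W ≃L[ℝ] W) : W →L[ℝ] W)‖ ≤ c)
    (f : V → W)
    (hfequiv : ∀ (g : G) (X : V), f (ρ₁ g X) = ρ₂ g (f X))
    (ε : ℝ) (Φ : V → W)
    (hΦ : ∀ Y ∈ ⋃ X ∈ K, {Y : V | ∃ g ∈ F X, Y = (ρ₁ g)⁻¹ X},
        ‖Φ Y - f Y‖ ≤ ε / c) :
    ∀ X ∈ K, ‖frameAvg ρ₁ ρ₂ F Φ X - f X‖ ≤ ε := by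
  intro X hX
  have hne : (F X).Nonempty := Finset.card_pos.mp (hcard X ▸ hm)
  rw [← frameAvg_eq_self_of_equivariant ρ₁ ρ₂ F hfequiv hne, frameAvg_sub, frameAvg]
  refine Finset.norm_inv_card_smul_sum_le hne fun g hg => ?_
  have hY : (ρ₁ g)⁻¹ X ∈ ⋃ X ∈ K, {Y : V | ∃ g ∈ F X, Y = (ρ₁ g)⁻¹ X} :=
    Set.mem_biUnion hX ⟨g, hg, rfl⟩
  calc ‖ρ₂ g ((Φ - f) ((ρ₁ g)⁻¹ X))‖ ≤ c * (ε / c) :=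
        (ρ₂ g : W →L[ℝ] W).le_of_opNorm_le_of_le (hbound X hX g hg) (hΦ _ hY)
    _ = ε := mul_div_cancel₀ ε hc.ne'

/-- Expressivity preservation: if the frame `F` is bounded on `K` by `c`,
`G`-equivariant, with `|F(X)| = m` constant, and `Φ` approximates the
continuous `G`-equivariant target `f` within `ε/c` on the saturated domain
`K' = ⋃_{X∈K} {ρ₁(g)⁻¹X : g ∈ F(X)}`, then `⟨Φ⟩_F` approximates `f`
within `ε` on `K`. -/
theorem frameAvg_universal_approx {G V W : Type*} [Group G] [DecidableEq G]
    [NormedAddCommGroup V] [NormedSpace ℝ V]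
    [NormedAddCommGroup W] [NormedSpace ℝ W]
    (ρ₁ : G →* (V ≃ₗ[ℝ] V)) (ρ₂ : G →* (W ≃L[ℝ] W))
    (F : V → Finset G) (K : Set V) (hK : IsCompact K)
    (m : ℕ) (hm : 0 < m) (hcard : ∀ X : V, (F X).card = m)
    (hF : ∀ (g : G) (X : V), F (ρ₁ g X) = (F X).image (fun h => g * h))
    (c : ℝ) (hc : 0 < c)
    (hbound : ∀ X ∈ K, ∀ g ∈ F X, ‖((ρ₂ g : W ≃L[ℝ] W) : W →L[ℝ] W)‖ ≤ c)
    (f : V → W) (hfcont : Continuous f)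
    (hfequiv : ∀ (g : G) (X : V), f (ρ₁ g X) = ρ₂ g (f X))
    (ε : ℝ) (Φ : V → W)
    (hΦ : ∀ Y ∈ ⋃ X ∈ K, {Y : V | ∃ g ∈ F X, Y = (ρ₁ g)⁻¹ X},
        ‖Φ Y - f Y‖ ≤ ε / c) :
    ∀ X ∈ K, ‖frameAvg ρ₁ ρ₂ F Φ X - f X‖ ≤ ε :=
  frameAvg_universal_approx_general ρ₁ ρ₂ F K m hm hcard c hc hbound f hfequiv ε Φ hΦ
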